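/- arXiv:math/0508335 — 2 statements merged into one kernel-verified Lean document; each statement's English description precedes it below -/
import Mathlib

section
/- Orthonormality-type completeness identity for the star-graph scattering states: for ω > 0, α > 0, N ≥ 1, and x, y ∈ ℝ, (1/(2π)) ∑_{l=1}^N ψ_j^l(x) · conj(ψ_{j'}^l(y)) = (2/π) δ_{jj'} sin(ωx) sin(ωy) + (2/π)(α² + N²ω²)⁻¹ { Nω² cos(ω(x+y)) + αω sin(ω(x+y)) }, where ψ_j^l(x) = −2i δ_j^l sin(ωx) + 2ω (Nω − iα)/(α² + N²ω²) e^{iωx}. -/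
/-!
Write `ψ_j^l(x) = -2i δ_{jl} sin(ωx) + c e^{iωx}`. Summing the products over `l`, the two
Kronecker deltas give `4 δ_{jj'} sin(ωx) sin(ωy)`. Using `2i sin θ = e^{iθ} - e^{-iθ}`, the mixed
terms become `c e^{iω(x+y)} + c̄ e^{-iω(x+y)} - (c + c̄) e^{iω(x-y)}`, and the last summand
cancels against `N |c|² e^{iω(x-y)}` because `N |c|² = 2 Re c`. What survives is
`2 Re (c e^{iω(x+y)})`, which is the second term of the kernel.
-/

open Complex Real

open ComplexConjugate

theorem sum_delta_mul_add_mul_delta_mul_add {ι R : Type*} [Fintype ι] [DecidableEq ι]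
    [CommSemiring R] (j j' : ι) (u p v q : R) :
    ∑ l, ((if j = l then 1 else 0) * u + p) * ((if j' = l then 1 else 0) * v + q) =
      (if j = j' then 1 else 0) * (u * v) + (u * q + p * v + Fintype.card ι * (p * q)) := by
  simp only [add_mul, mul_add, ite_mul, mul_ite, one_mul, zero_mul, mul_zero,
    Finset.sum_add_distrib, Finset.sum_ite_eq, Finset.mem_univ, if_true, Finset.sum_const,
    Finset.card_univ, nsmul_eq_mul]
  ring

theorem two_mul_I_mul_sin (θ : ℂ) : 2 * I * Complex.sin θ = exp (θ * I) - exp (-θ * I) := by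
  linear_combination I * two_sin θ + (exp (-θ * I) - exp (θ * I)) * I_sq

theorem exp_cross_terms {c d t : ℂ} (h : t * (c * d) = c + d) (θ₁ θ₂ : ℂ) :
    -2 * I * Complex.sin θ₁ * (d * exp (-θ₂ * I)) + c * exp (θ₁ * I) * (2 * I * Complex.sin θ₂)
        + t * (c * exp (θ₁ * I) * (d * exp (-θ₂ * I)))
      = c * exp ((θ₁ + θ₂) * I) + d * exp (-(θ₁ + θ₂) * I) := by
  rw [neg_add, add_mul, add_mul, Complex.exp_add, Complex.exp_add]
  linear_combination -d * exp (-θ₂ * I) * two_mul_I_mul_sin θ₁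
    + c * exp (θ₁ * I) * two_mul_I_mul_sin θ₂ + exp (θ₁ * I) * exp (-θ₂ * I) * h

noncomputable def scatteringAmplitude (N : ℕ) (α ω : ℝ) : ℂ :=
  2 * ω * (N * ω - I * α) / (α ^ 2 + N ^ 2 * ω ^ 2)

theorem conj_scatteringAmplitude (N : ℕ) (α ω : ℝ) :
    conj (scatteringAmplitude N α ω) = 2 * ω * (N * ω + I * α) / (α ^ 2 + N ^ 2 * ω ^ 2) := by
  simp [scatteringAmplitude, map_ofNat]

theorem natCast_mul_scatteringAmplitude_mul_conj (N : ℕ) (α ω : ℝ) :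
    (N : ℂ) * (scatteringAmplitude N α ω * conj (scatteringAmplitude N α ω)) =
      scatteringAmplitude N α ω + conj (scatteringAmplitude N α ω) := by
  rw [conj_scatteringAmplitude, scatteringAmplitude]
  rcases eq_or_ne ((α : ℂ) ^ 2 + N ^ 2 * ω ^ 2) 0 with hD | hD
  · simp [hD]
  · field_simp
    linear_combination -2 * N * ω ^ 2 * α ^ 2 * I_sq

theorem scatteringAmplitude_mul_exp_add_conj (N : ℕ) (α ω : ℝ) (θ : ℂ) :
    scatteringAmplitude N α ω * exp (θ * I) + conj (scatteringAmplitude N α ω) * exp (-θ * I) =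
      4 * ω * (N * ω * Complex.cos θ + α * Complex.sin θ) / (α ^ 2 + N ^ 2 * ω ^ 2) := by
  rw [conj_scatteringAmplitude, scatteringAmplitude, ← cos_add_sin_I, ← cos_sub_sin_I]
  linear_combination (-4 * ω * α * Complex.sin θ / (α ^ 2 + N ^ 2 * ω ^ 2)) * I_sq

theorem scattering_states_completeness_general (N : ℕ) (α ω : ℝ)
    (j j' : Fin N) (x y : ℝ)
    (ψ : Fin N → Fin N → ℝ → ℂ)
    (hψ : ∀ j l z, ψ j l z =
      -2 * Complex.I * (if j = l then 1 else 0) * (Real.sin (ω * z) : ℂ)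
      + 2 * (ω : ℂ) * ((N : ℂ) * ω - Complex.I * α)
          / ((α : ℂ) ^ 2 + (N : ℂ) ^ 2 * (ω : ℂ) ^ 2)
        * Complex.exp (Complex.I * ω * z)) :
    (1 / (2 * (π : ℂ))) * ∑ l, ψ j l x * (starRingEnd ℂ) (ψ j' l y)
      = (2 / (π : ℂ)) * (if j = j' then 1 else 0)
          * (Real.sin (ω * x) : ℂ) * (Real.sin (ω * y) : ℂ)
        + (2 / ((π : ℂ) * ((α : ℂ) ^ 2 + (N : ℂ) ^ 2 * (ω : ℂ) ^ 2)))
          * ((N : ℂ) * (ω : ℂ) ^ 2 * (Real.cos (ω * (x + y)) : ℂ)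
            + (α : ℂ) * (ω : ℂ) * (Real.sin (ω * (x + y)) : ℂ)) := by
  set c := scatteringAmplitude N α ω with hc
  have hψ' : ∀ j l z, ψ j l z =
      (if j = l then 1 else 0) * (-2 * I * (Real.sin (ω * z) : ℂ)) + c * exp ((ω * z : ℝ) * I) := by
    intro j l z
    rw [hψ, hc, scatteringAmplitude]
    push_cast
    ring_nf
  have hψ_conj : ∀ l, conj (ψ j' l y) =
      (if j' = l then 1 else 0) * (2 * I * (Real.sin (ω * y) : ℂ))
        + conj c * exp (-(ω * y : ℝ) * I) := by
    intro l
    rw [hψ']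
    split_ifs <;> simp [← exp_conj, map_ofNat, -ofReal_sin]
  simp_rw [hψ_conj, hψ', sum_delta_mul_add_mul_delta_mul_add, Fintype.card_fin]
  push_cast
  rw [exp_cross_terms (natCast_mul_scatteringAmplitude_mul_conj N α ω), ← mul_add,
    scatteringAmplitude_mul_exp_add_conj, ← div_div (2 : ℂ) (π : ℂ)]
  linear_combination (-(2 / π) * (if j = j' then 1 else 0)
    * Complex.sin (ω * x) * Complex.sin (ω * y)) * I_sq

/-- Completeness/orthonormality identity for the star-graph scattering states:
`(1/(2π)) ∑_l ψ_j^l(x) conj(ψ_{j'}^l(y))` equals the spectral projection kernel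
`(2/π) δ_{jj'} sin(ωx) sin(ωy) + (2/(π(α²+N²ω²)))(Nω² cos(ω(x+y)) + αω sin(ω(x+y)))`. -/
theorem scattering_states_completeness (N : ℕ) (hN : 1 ≤ N) (α ω : ℝ)
    (hα : 0 < α) (hω : 0 < ω) (j j' : Fin N) (x y : ℝ)
    (ψ : Fin N → Fin N → ℝ → ℂ)
    (hψ : ∀ j l z, ψ j l z =
      -2 * Complex.I * (if j = l then 1 else 0) * (Real.sin (ω * z) : ℂ)
      + 2 * (ω : ℂ) * ((N : ℂ) * ω - Complex.I * α)
          / ((α : ℂ) ^ 2 + (N : ℂ) ^ 2 * (ω : ℂ) ^ 2)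
        * Complex.exp (Complex.I * ω * z)) :
    (1 / (2 * (π : ℂ))) * ∑ l, ψ j l x * (starRingEnd ℂ) (ψ j' l y)
      = (2 / (π : ℂ)) * (if j = j' then 1 else 0)
          * (Real.sin (ω * x) : ℂ) * (Real.sin (ω * y) : ℂ)
        + (2 / ((π : ℂ) * ((α : ℂ) ^ 2 + (N : ℂ) ^ 2 * (ω : ℂ) ^ 2)))
          * ((N : ℂ) * (ω : ℂ) ^ 2 * (Real.cos (ω * (x + y)) : ℂ)
            + (α : ℂ) * (ω : ℂ) * (Real.sin (ω * (x + y)) : ℂ)) :=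
  scattering_states_completeness_general N α ω j j' x y ψ hψ
end

section
/- Large-distance Dirichlet limit of the star-graph vacuum energy density: for N ≥ 1 and α > 0, T₀₀(x) = (1 − 2/N)/(8πx²) + α/(2πN²x) + (α²/(πN³)) e^{2αx/N} Ei(−2αx/N) satisfies lim_{x→∞} 8πx²·T₀₀(x) = 1; i.e., T₀₀(x) ~ 1/(8πx²) as x → ∞. -/
/-!
With `y = 2αx/N` and `E₁(y) = -Ei(-y)`, one has
`8πx² T₀₀(x) = 1 - (2/N) (y² e^y E₁(y) - y + 1)`, so it suffices that `y² e^y E₁(y) - y → -1`.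
This follows from the two-sided bound `e^{-y}(1/y - 1/y²) ≤ E₁(y) ≤ e^{-y}(1/y - 1/y² + 2/y³)`,
obtained by integrating by parts against `e^{-s}` with the partial sums of the asymptotic series
as antiderivatives.
-/

open Real Filter MeasureTheory Set Topology

lemma integrableOn_exp_neg_mul_inv_pow {y : ℝ} (hy : 0 < y) (k : ℕ) :
    IntegrableOn (fun s => exp (-s) * (s ^ k)⁻¹) (Ioi y) := by
  refine (integrableOn_exp_neg_Ioi y).mul_bdd (c := (y ^ k)⁻¹) (by fun_prop) ?_
  filter_upwards [ae_restrict_mem measurableSet_Ioi] with s (hs : y < s)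
  rw [norm_inv, norm_pow, norm_of_nonneg (hy.trans hs).le]
  exact inv_anti₀ (pow_pos hy k) (pow_le_pow_left₀ hy.le hs.le k)

theorem integral_Ioi_exp_neg_mul_sub_deriv {p p' : ℝ → ℝ} {y : ℝ}
    (hp : ∀ s ∈ Ici y, HasDerivAt p (p' s) s)
    (hint : IntegrableOn (fun s => exp (-s) * (p s - p' s)) (Ioi y))
    (hlim : Tendsto p atTop (𝓝 0)) :
    ∫ s in Ioi y, exp (-s) * (p s - p' s) = exp (-y) * p y := by
  have hderiv : ∀ s ∈ Ici y,
      HasDerivAt (fun t => -(exp (-t) * p t)) (exp (-s) * (p s - p' s)) s := fun s hs =>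
    ((hasDerivAt_neg s).exp.mul (hp s hs)).neg.congr_deriv (by ring)
  have hzero : Tendsto (fun t => -(exp (-t) * p t)) atTop (𝓝 0) := by
    simpa using (tendsto_exp_neg_atTop_nhds_zero.mul hlim).neg
  rw [integral_Ioi_of_hasDerivAt_of_tendsto' hderiv hint hzero]
  ring

lemma hasDerivAt_inv_pow (k : ℕ) {s : ℝ} (hs : s ≠ 0) :
    HasDerivAt (fun t => (t ^ k)⁻¹) (-k * (s ^ (k + 1))⁻¹) s := by
  refine ((hasDerivAt_pow k s).inv (pow_ne_zero k hs)).congr_deriv ?_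
  rcases k with _ | k
  · simp
  · rw [Nat.add_sub_cancel]
    field_simp
    ring

/-- The exponential integral `E₁`, with `Ei (-y) = -E₁ y` for `y > 0`. -/
noncomputable def expIntegralE1 (y : ℝ) : ℝ := ∫ s in Ioi y, exp (-s) / s

lemma integrableOn_exp_neg_div {y : ℝ} (hy : 0 < y) :
    IntegrableOn (fun s => exp (-s) / s) (Ioi y) := by
  simpa [div_eq_mul_inv] using integrableOn_exp_neg_mul_inv_pow hy 1

lemma exp_neg_mul_le_expIntegralE1 {y : ℝ} (hy : 0 < y) :
    exp (-y) * (y⁻¹ - (y ^ 2)⁻¹) ≤ expIntegralE1 y := by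
  have hderiv : ∀ s ∈ Ici y, HasDerivAt (fun t => t⁻¹ - (t ^ 2)⁻¹) (-(s ^ 2)⁻¹ + 2 * (s ^ 3)⁻¹) s :=
    fun s hs => by
      have hs0 : s ≠ 0 := (hy.trans_le hs).ne'
      simpa using (hasDerivAt_inv_pow 1 hs0).fun_sub (hasDerivAt_inv_pow 2 hs0)
  have hint : IntegrableOn
      (fun s => exp (-s) * ((s⁻¹ - (s ^ 2)⁻¹) - (-(s ^ 2)⁻¹ + 2 * (s ^ 3)⁻¹))) (Ioi y) := by
    refine ((integrableOn_exp_neg_mul_inv_pow hy 1).sub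
      ((integrableOn_exp_neg_mul_inv_pow hy 3).const_mul 2)).congr_fun (fun s _ => ?_)
      measurableSet_Ioi
    simp only [Pi.sub_apply, pow_one]
    ring
  have hlim : Tendsto (fun t : ℝ => t⁻¹ - (t ^ 2)⁻¹) atTop (𝓝 0) := by
    simpa using (tendsto_inv_atTop_zero (𝕜 := ℝ)).sub
      (tendsto_pow_atTop two_ne_zero).inv_tendsto_atTop
  rw [← integral_Ioi_exp_neg_mul_sub_deriv hderiv hint hlim]
  refine setIntegral_mono_on hint (integrableOn_exp_neg_div hy) measurableSet_Ioi fun s hs => ?_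
  have hs0 : 0 < s := hy.trans hs
  have : 0 ≤ exp (-s) * (s ^ 3)⁻¹ := by positivity
  rw [div_eq_mul_inv]
  linarith

lemma expIntegralE1_le_exp_neg_mul {y : ℝ} (hy : 0 < y) :
    expIntegralE1 y ≤ exp (-y) * (y⁻¹ - (y ^ 2)⁻¹ + 2 * (y ^ 3)⁻¹) := by
  have hderiv : ∀ s ∈ Ici y, HasDerivAt (fun t => t⁻¹ - (t ^ 2)⁻¹ + 2 * (t ^ 3)⁻¹)
      (-(s ^ 2)⁻¹ + 2 * (s ^ 3)⁻¹ - 6 * (s ^ 4)⁻¹) s := fun s hs => by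
    have hs0 : s ≠ 0 := (hy.trans_le hs).ne'
    have := ((hasDerivAt_inv_pow 1 hs0).fun_sub (hasDerivAt_inv_pow 2 hs0)).fun_add
      ((hasDerivAt_inv_pow 3 hs0).const_mul 2)
    simp only [pow_one] at this
    exact this.congr_deriv (by norm_num; ring)
  have hint : IntegrableOn
      (fun s => exp (-s) * ((s⁻¹ - (s ^ 2)⁻¹ + 2 * (s ^ 3)⁻¹)
        - (-(s ^ 2)⁻¹ + 2 * (s ^ 3)⁻¹ - 6 * (s ^ 4)⁻¹))) (Ioi y) := by
    refine ((integrableOn_exp_neg_mul_inv_pow hy 1).add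
      ((integrableOn_exp_neg_mul_inv_pow hy 4).const_mul 6)).congr_fun (fun s _ => ?_)
      measurableSet_Ioi
    simp only [Pi.add_apply, pow_one]
    ring
  have hlim : Tendsto (fun t : ℝ => t⁻¹ - (t ^ 2)⁻¹ + 2 * (t ^ 3)⁻¹) atTop (𝓝 0) := by
    simpa using ((tendsto_inv_atTop_zero (𝕜 := ℝ)).sub
      (tendsto_pow_atTop two_ne_zero).inv_tendsto_atTop).add
      ((tendsto_pow_atTop three_ne_zero).inv_tendsto_atTop.const_mul 2)
  rw [← integral_Ioi_exp_neg_mul_sub_deriv hderiv hint hlim]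
  refine setIntegral_mono_on (integrableOn_exp_neg_div hy) hint measurableSet_Ioi fun s hs => ?_
  have hs0 : 0 < s := hy.trans hs
  have : 0 ≤ exp (-s) * (s ^ 4)⁻¹ := by positivity
  rw [div_eq_mul_inv]
  linarith

lemma tendsto_sq_mul_exp_mul_expIntegralE1_sub :
    Tendsto (fun y => y ^ 2 * exp y * expIntegralE1 y - y) atTop (𝓝 (-1)) := by
  have hupper : Tendsto (fun y : ℝ => -1 + 2 * y⁻¹) atTop (𝓝 (-1)) := by
    simpa using ((tendsto_inv_atTop_zero (𝕜 := ℝ)).const_mul 2).const_add (-1)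
  refine tendsto_of_tendsto_of_tendsto_of_le_of_le' tendsto_const_nhds hupper ?_ ?_
  all_goals filter_upwards [eventually_gt_atTop 0] with y hy
  · have h := mul_le_mul_of_nonneg_left (exp_neg_mul_le_expIntegralE1 hy)
      (by positivity : 0 ≤ y ^ 2 * exp y)
    have e : y ^ 2 * exp y * (exp (-y) * (y⁻¹ - (y ^ 2)⁻¹)) = y - 1 := by
      rw [exp_neg]
      field_simp
    linarith
  · have h := mul_le_mul_of_nonneg_left (expIntegralE1_le_exp_neg_mul hy)
      (by positivity : 0 ≤ y ^ 2 * exp y)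
    have e : y ^ 2 * exp y * (exp (-y) * (y⁻¹ - (y ^ 2)⁻¹ + 2 * (y ^ 3)⁻¹))
        = y - 1 + 2 * y⁻¹ := by
      rw [exp_neg]
      field_simp
    linarith

/-- Large-distance Dirichlet limit of the star-graph vacuum energy density:
`8πx² T₀₀(x) → 1` as `x → ∞`, where
`T₀₀(x) = (1 − 2/N)/(8πx²) + α/(2πN²x) + (α²/(πN³)) e^{2αx/N} Ei(−2αx/N)`
with `Ei(−y) = −∫_y^∞ e^{−s}/s ds`. -/
theorem vacuum_energy_far_limit (N : ℕ) (hN : 1 ≤ N) (α : ℝ) (hα : 0 < α)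
    (Ei : ℝ → ℝ)
    (hEi : ∀ y : ℝ, 0 < y → Ei (-y) = -∫ s in Set.Ioi y, Real.exp (-s) / s)
    (T00 : ℝ → ℝ)
    (hT : ∀ x : ℝ, 0 < x → T00 x =
      (1 - 2 / (N : ℝ)) / (8 * π * x ^ 2) + α / (2 * π * (N : ℝ) ^ 2 * x)
      + (α ^ 2 / (π * (N : ℝ) ^ 3)) * Real.exp (2 * α * x / N) * Ei (-(2 * α * x / N))) :
    Tendsto (fun x : ℝ => 8 * π * x ^ 2 * T00 x) atTop (nhds 1) := by
  have hN0 : (0 : ℝ) < N := by exact_mod_cast hN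
  have hy : Tendsto (fun x : ℝ => 2 * α * x / N) atTop atTop :=
    (tendsto_id.const_mul_atTop (by positivity : 0 < 2 * α)).atTop_div_const hN0
  have hlim := ((tendsto_sq_mul_exp_mul_expIntegralE1_sub.comp hy).const_mul (2 / N : ℝ)).const_sub
    (1 - 2 / N : ℝ)
  rw [show (1 - 2 / N : ℝ) - 2 / N * -1 = 1 by ring] at hlim
  refine hlim.congr' ?_
  filter_upwards [eventually_gt_atTop 0] with x hx
  have hy0 : 0 < 2 * α * x / N := by positivity
  rw [hT x hx, hEi _ hy0, Function.comp_apply, expIntegralE1]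
  field_simp
  ring
end
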